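/- arXiv:1310.1610 — 2 statements merged into one kernel-verified Lean document; each statement's English description precedes it below -/
import Mathlib

section
/- Let G be a connected graph with minimum degree δ(G) ≥ 4 and at least 5 vertices. Then the total restrained bondage number satisfies b_tr(G) ≤ ξ(G) + Δ(G) − 2, where ξ(G) = min{deg(x)+deg(y)−2 : xy ∈ E(G)} and Δ(G) is the maximum degree. -/
open SimpleGraph Finset

variable {V : Type*} [Fintype V] [DecidableEq V]

/-- The number of orbits (cycles together with fixed points) of a permutation of a finite type. -/
noncomputable def permNumOrbits {α : Type*} [Fintype α] [DecidableEq α] (ψ : Equiv.Perm α) : ℕ :=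
  Multiset.card ψ.cycleType + (Finset.univ.filter fun a => ψ a = a).card

/-- A combinatorial (2-cell) embedding scheme of a graph on a surface:
a rotation system together with an edge signature (Mohar–Thomassen). -/
structure SimpleGraph.EmbeddingScheme (G : SimpleGraph V) [DecidableRel G.Adj] where
  rot : Equiv.Perm G.Dart
  rot_fst : ∀ d : G.Dart, (rot d).toProd.1 = d.toProd.1
  rot_cyclic : ∀ d e : G.Dart, d.toProd.1 = e.toProd.1 → ∃ k : ℕ, (rot ^ k) d = e
  sign : G.Dart → ℤˣ
  sign_symm : ∀ d : G.Dart, sign d.symm = sign d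

namespace SimpleGraph.EmbeddingScheme

variable {G : SimpleGraph V} [DecidableRel G.Adj] (S : G.EmbeddingScheme)

def swapPerm : Equiv.Perm (G.Dart × ℤˣ) :=
  Function.Involutive.toPerm (fun p => (p.1.symm, p.2 * S.sign p.1)) (by
    intro p
    simp [SimpleGraph.Dart.symm_symm, S.sign_symm p.1, mul_assoc, Int.units_mul_self])

def rotPerm : Equiv.Perm (G.Dart × ℤˣ) where
  toFun p := ((S.rot ^ (p.2 : ℤ)) p.1, p.2)
  invFun p := ((S.rot ^ (-(p.2 : ℤ))) p.1, p.2)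
  left_inv p := by
    simp [← Equiv.Perm.mul_apply, ← zpow_add]
  right_inv p := by
    show ((S.rot ^ (p.2 : ℤ)) ((S.rot ^ (-(p.2 : ℤ))) p.1), p.2) = p
    rw [← Equiv.Perm.mul_apply, ← zpow_add]
    simp

/-- The face-tracing permutation on signed darts. -/
def faceMap : Equiv.Perm (G.Dart × ℤˣ) := S.swapPerm.trans S.rotPerm

/-- Each face is traced by exactly two orbits of the face-tracing permutation. -/
noncomputable def numFaces : ℕ := permNumOrbits S.faceMap / 2

/-- The Euler characteristic of the closed surface determined by the scheme. -/
noncomputable def eulerChar : ℤ :=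
  (Fintype.card V : ℤ) - (G.edgeFinset.card : ℤ) + (S.numFaces : ℤ)

/-- The scheme describes an embedding on an orientable surface iff its signature
is switching-equivalent to the all-positive signature. -/
def IsOrientable : Prop := ∃ θ : V → ℤˣ, ∀ d : G.Dart, S.sign d = θ d.toProd.1 * θ d.toProd.2

end SimpleGraph.EmbeddingScheme

/-- `G` has orientable genus `g`. -/
def SimpleGraph.HasOrientableGenus (G : SimpleGraph V) [DecidableRel G.Adj] (g : ℕ) : Prop :=
  (∃ S : G.EmbeddingScheme, S.IsOrientable ∧ S.eulerChar = 2 - 2 * (g : ℤ)) ∧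
  ∀ g' : ℕ, g' < g → ¬ ∃ S : G.EmbeddingScheme, S.IsOrientable ∧ S.eulerChar = 2 - 2 * (g' : ℤ)

/-- `G` has nonorientable genus `k`. -/
def SimpleGraph.HasNonorientableGenus (G : SimpleGraph V) [DecidableRel G.Adj] (k : ℕ) : Prop :=
  (∃ S : G.EmbeddingScheme, ¬ S.IsOrientable ∧ S.eulerChar = 2 - (k : ℤ)) ∧
  ∀ k' : ℕ, k' < k → ¬ ∃ S : G.EmbeddingScheme, ¬ S.IsOrientable ∧ S.eulerChar = 2 - (k' : ℤ)

/-- `G` is planar: every component embeds in the sphere. -/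
def SimpleGraph.IsPlanar (G : SimpleGraph V) [DecidableRel G.Adj] : Prop :=
  ∃ S : G.EmbeddingScheme, S.IsOrientable ∧
    S.eulerChar = 2 * (Nat.card G.ConnectedComponent : ℤ)

/-- `S` is a total dominating set: every vertex has a neighbour in `S`. -/
def SimpleGraph.IsTotalDominatingSet (G : SimpleGraph V) (S : Finset V) : Prop :=
  ∀ v : V, ∃ u ∈ S, G.Adj u v

noncomputable def SimpleGraph.totalDominationNumber (G : SimpleGraph V) : ℕ :=
  sInf {k : ℕ | ∃ S : Finset V, G.IsTotalDominatingSet S ∧ S.card = k}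

/-- The spanning subgraph of `G` keeping only edges meeting `S`. -/
def SimpleGraph.weakSubgraph (G : SimpleGraph V) (S : Finset V) : SimpleGraph V where
  Adj u v := G.Adj u v ∧ (u ∈ S ∨ v ∈ S)
  symm := ⟨fun u v h => ⟨h.1.symm, h.2.symm⟩⟩
  loopless := ⟨fun v h => G.loopless.irrefl v h.1⟩

/-- `S` is a weakly connected dominating set. -/
def SimpleGraph.IsWeaklyConnectedDominatingSet (G : SimpleGraph V) (S : Finset V) : Prop :=
  S.Nonempty ∧ (G.weakSubgraph S).Connected

noncomputable def SimpleGraph.weaklyConnectedDominationNumber (G : SimpleGraph V) : ℕ :=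
  sInf {k : ℕ | ∃ S : Finset V, G.IsWeaklyConnectedDominatingSet S ∧ S.card = k}

/-- `S` is a connected dominating set. -/
def SimpleGraph.IsConnectedDominatingSet (G : SimpleGraph V) (S : Finset V) : Prop :=
  (∀ v ∉ S, ∃ u ∈ S, G.Adj u v) ∧ (G.induce (S : Set V)).Connected

noncomputable def SimpleGraph.connectedDominationNumber (G : SimpleGraph V) : ℕ :=
  sInf {k : ℕ | ∃ S : Finset V, G.IsConnectedDominatingSet S ∧ S.card = k}

/-- `S` is a restrained dominating set. -/
def SimpleGraph.IsRestrainedDominatingSet (G : SimpleGraph V) (S : Finset V) : Prop :=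
  ∀ v ∉ S, (∃ u ∈ S, G.Adj u v) ∧ (∃ w ∉ S, G.Adj w v)

noncomputable def SimpleGraph.restrainedDominationNumber (G : SimpleGraph V) : ℕ :=
  sInf {k : ℕ | ∃ S : Finset V, G.IsRestrainedDominatingSet S ∧ S.card = k}

/-- The restrained bondage number. -/
noncomputable def SimpleGraph.restrainedBondageNumber (G : SimpleGraph V) : ℕ :=
  sInf {k : ℕ | ∃ F : Finset (Sym2 V), ↑F ⊆ G.edgeSet ∧ F.card = k ∧
    G.restrainedDominationNumber < (G.deleteEdges ↑F).restrainedDominationNumber}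

/-- `S` is a total restrained dominating set. -/
def SimpleGraph.IsTotalRestrainedDominatingSet (G : SimpleGraph V) (S : Finset V) : Prop :=
  (∀ v : V, ∃ u ∈ S, G.Adj u v) ∧ ∀ v ∉ S, ∃ w ∉ S, G.Adj w v

noncomputable def SimpleGraph.totalRestrainedDominationNumber (G : SimpleGraph V) : ℕ :=
  sInf {k : ℕ | ∃ S : Finset V, G.IsTotalRestrainedDominatingSet S ∧ S.card = k}

/-- The total restrained bondage number (`⊤` if no suitable edge set exists). -/
noncomputable def SimpleGraph.totalRestrainedBondageNumber (G : SimpleGraph V) : ℕ∞ :=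
  sInf {k : ℕ∞ | ∃ F : Finset (Sym2 V), ↑F ⊆ G.edgeSet ∧ (F.card : ℕ∞) = k ∧
    (∀ v : V, ∃ u : V, (G.deleteEdges ↑F).Adj u v) ∧
    G.totalRestrainedDominationNumber < (G.deleteEdges ↑F).totalRestrainedDominationNumber}

/-- Roman dominating function. -/
def SimpleGraph.IsRomanDominatingFunction (G : SimpleGraph V) (f : V → ℕ) : Prop :=
  (∀ v : V, f v ≤ 2) ∧ ∀ v : V, f v = 0 → ∃ u : V, G.Adj u v ∧ f u = 2

noncomputable def SimpleGraph.romanDominationNumber (G : SimpleGraph V) : ℕ :=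
  sInf {k : ℕ | ∃ f : V → ℕ, G.IsRomanDominatingFunction f ∧ ∑ v : V, f v = k}

noncomputable def SimpleGraph.romanBondageNumber (G : SimpleGraph V) : ℕ :=
  sInf {k : ℕ | ∃ F : Finset (Sym2 V), ↑F ⊆ G.edgeSet ∧ F.card = k ∧
    G.romanDominationNumber < (G.deleteEdges ↑F).romanDominationNumber}

/-- The minimum edge-degree `ξ(G)`. -/
noncomputable def SimpleGraph.minEdgeDegree (G : SimpleGraph V) [DecidableRel G.Adj] : ℕ :=
  sInf {k : ℕ | ∃ d : G.Dart, G.degree d.toProd.1 + G.degree d.toProd.2 - 2 = k}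

/-- A restricted edge-cut: removing it disconnects `G` leaving no isolated vertex. -/
def SimpleGraph.IsRestrictedEdgeCut (G : SimpleGraph V) (F : Finset (Sym2 V)) : Prop :=
  ↑F ⊆ G.edgeSet ∧ ¬ (G.deleteEdges ↑F).Connected ∧
    ∀ v : V, ∃ u : V, (G.deleteEdges ↑F).Adj u v

/-- The restricted edge-connectivity `λ'(G)`. -/
noncomputable def SimpleGraph.restrictedEdgeConnectivity (G : SimpleGraph V) : ℕ :=
  sInf {k : ℕ | ∃ F : Finset (Sym2 V), G.IsRestrictedEdgeCut F ∧ F.card = k}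

/-- `G` is a star: all edges share a common vertex. -/
def SimpleGraph.IsStar (G : SimpleGraph V) : Prop :=
  ∃ c : V, ∀ e ∈ G.edgeSet, c ∈ e

/-- The average degree `2|E|/|V|` of `G`. -/
noncomputable def SimpleGraph.averageDegree (G : SimpleGraph V) [DecidableRel G.Adj] : ℝ :=
  2 * (G.edgeFinset.card : ℝ) / (Fintype.card V : ℝ)

def h1 (x : ℕ) : ℕ := if x ≤ 3 then 2 * x + 13 else 4 * x + 7
def h2 (x : ℕ) : ℕ := if x = 0 then 8 else 4 * x + 5
def k1 (x : ℕ) : ℕ := if x ≤ 2 then 2 * x + 11 else if x ≤ 5 then 2 * x + 9 else 2 * x + 7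
def k2 (x : ℕ) : ℕ := if x = 1 then 8 else 2 * x + 5

/-!
Take an edge `xy` realising `ξ(G)` and a further neighbour `z` of `y`, and delete every edge at
`x`, `y`, `z` except `xy` and `yz`: at most `deg x + deg y + deg z - 4 ≤ ξ(G) + Δ(G) - 2` edges.
Since `δ(G) ≥ 4`, no vertex becomes isolated. Now `x` and `z` are leaves at `y`, so every total
restrained dominating set `S` of the new graph contains `x, y, z`, while `S \ {x, y, z}` already
dominates and restrains every other vertex in `G`; adding at most two of `x, y, z` to it gives a
total restrained dominating set of `G`, so `γ_tr` strictly increases.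
-/

namespace SimpleGraph

section Domination

variable {V : Type*} {G : SimpleGraph V}

lemma totalRestrainedDominationNumber_le_card {S : Finset V}
    (hS : G.IsTotalRestrainedDominatingSet S) : G.totalRestrainedDominationNumber ≤ #S :=
  Nat.sInf_le ⟨S, hS, rfl⟩

lemma exists_isTotalRestrainedDominatingSet_card_eq [Fintype V] (hG : ∀ v, ∃ u, G.Adj u v) :
    ∃ S : Finset V, G.IsTotalRestrainedDominatingSet S ∧
      #S = G.totalRestrainedDominationNumber := by
  have huniv : G.IsTotalRestrainedDominatingSet univ :=
    ⟨fun v ↦ (hG v).imp fun u hu ↦ ⟨mem_univ u, hu⟩, fun v hv ↦ absurd (mem_univ v) hv⟩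
  exact Nat.sInf_mem (⟨#univ, univ, huniv, rfl⟩ :
    {k | ∃ S : Finset V, G.IsTotalRestrainedDominatingSet S ∧ #S = k}.Nonempty)

lemma totalRestrainedBondageNumber_le_card {F : Finset (Sym2 V)}
    (hF : ↑F ⊆ G.edgeSet) (hiso : ∀ v, ∃ u, (G.deleteEdges ↑F).Adj u v)
    (hlt : G.totalRestrainedDominationNumber <
      (G.deleteEdges ↑F).totalRestrainedDominationNumber) :
    G.totalRestrainedBondageNumber ≤ #F :=
  sInf_le ⟨F, hF, rfl, hiso, hlt⟩

end Domination

section PathStar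

variable {V : Type*} [Fintype V] [DecidableEq V] {G : SimpleGraph V} [DecidableRel G.Adj]
  {x y z : V}

variable (G x y z) in
def pathStarEdges : Finset (Sym2 V) :=
  (G.incidenceFinset x ∪ G.incidenceFinset y ∪ G.incidenceFinset z) \ {s(x, y), s(y, z)}

lemma mem_pathStarEdges {e : Sym2 V} : e ∈ G.pathStarEdges x y z ↔
    e ∈ G.edgeSet ∧ (x ∈ e ∨ y ∈ e ∨ z ∈ e) ∧ e ≠ s(x, y) ∧ e ≠ s(y, z) := by
  simp only [pathStarEdges, mem_sdiff, mem_union, mem_incidenceFinset, incidenceSet,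
    Set.mem_ofPred_eq, mem_insert, mem_singleton]
  tauto

lemma pathStarEdges_subset_edgeSet : ↑(G.pathStarEdges x y z) ⊆ G.edgeSet :=
  fun _ he ↦ (mem_pathStarEdges.1 he).1

lemma card_pathStarEdges_add_four_le (hxy : G.Adj x y) (hyz : G.Adj y z) (hxz : x ≠ z) :
    #(G.pathStarEdges x y z) + 4 ≤ G.degree x + G.degree y + G.degree z := by
  have hxy_mem : s(x, y) ∈ G.incidenceFinset x ∩ G.incidenceFinset y := by
    simp [mem_incidenceFinset, incidenceSet, hxy]
  have hyz_mem :
      s(y, z) ∈ (G.incidenceFinset x ∪ G.incidenceFinset y) ∩ G.incidenceFinset z := by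
    simp [mem_incidenceFinset, incidenceSet, hyz]
  have hpair : {s(x, y), s(y, z)} ⊆
      G.incidenceFinset x ∪ G.incidenceFinset y ∪ G.incidenceFinset z := by
    rw [insert_subset_iff, singleton_subset_iff]
    exact ⟨mem_union_left _ (mem_union_left _ (mem_inter.1 hxy_mem).1),
      mem_union_right _ (mem_inter.1 hyz_mem).2⟩
  have h₁ := card_union_add_card_inter (G.incidenceFinset x) (G.incidenceFinset y)
  have h₂ := card_union_add_card_inter (G.incidenceFinset x ∪ G.incidenceFinset y)
    (G.incidenceFinset z)
  have h₃ := card_sdiff_add_card_eq_card hpair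
  rw [card_pair (by simp [hxy.ne, hxz])] at h₃
  simp only [card_incidenceFinset_eq_degree] at h₁ h₂
  have := card_pos.2 ⟨_, hxy_mem⟩
  have := card_pos.2 ⟨_, hyz_mem⟩
  rw [pathStarEdges]
  omega

lemma deleteEdges_pathStarEdges_adj {u v : V} :
    (G.deleteEdges (G.pathStarEdges x y z)).Adj u v ↔ G.Adj u v ∧
      (s(u, v) = s(x, y) ∨ s(u, v) = s(y, z) ∨
        u ∉ ({x, y, z} : Finset V) ∧ v ∉ ({x, y, z} : Finset V)) := by
  simp only [deleteEdges_adj, mem_coe, mem_pathStarEdges, mem_edgeSet, Sym2.mem_iff, mem_insert,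
    mem_singleton, eq_comm (a := u), eq_comm (a := v)]
  tauto

lemma deleteEdges_pathStarEdges_adj_of_notMem {u v : V} (hv : v ∉ ({x, y, z} : Finset V)) :
    (G.deleteEdges (G.pathStarEdges x y z)).Adj u v ↔
      G.Adj u v ∧ u ∉ ({x, y, z} : Finset V) := by
  rw [deleteEdges_pathStarEdges_adj, Sym2.eq_iff, Sym2.eq_iff]
  grind

lemma deleteEdges_pathStarEdges_adj_start_iff (hxy : G.Adj x y) (hxz : x ≠ z) {u : V} :
    (G.deleteEdges (G.pathStarEdges x y z)).Adj u x ↔ u = y := by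
  rw [deleteEdges_pathStarEdges_adj, Sym2.eq_iff, Sym2.eq_iff]
  grind [G.loopless.irrefl, hxy.symm, hxy.ne]

lemma deleteEdges_pathStarEdges_adj_end_iff (hyz : G.Adj y z) (hxz : x ≠ z) {u : V} :
    (G.deleteEdges (G.pathStarEdges x y z)).Adj u z ↔ u = y := by
  rw [deleteEdges_pathStarEdges_adj, Sym2.eq_iff, Sym2.eq_iff]
  grind [G.loopless.irrefl, hyz.ne]

end PathStar

section Extension

variable {V : Type*} [DecidableEq V] {G : SimpleGraph V}

lemma isTotalRestrainedDominatingSet_union {T D A : Finset V} (hAT : A ⊆ T)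
    (hdom : ∀ v ∉ T, ∃ u ∈ D, G.Adj u v) (hres : ∀ v ∉ T, v ∉ D → ∃ w ∉ D, w ∉ T ∧ G.Adj w v)
    (hdomT : ∀ t ∈ T, ∃ u ∈ D ∪ A, G.Adj u t)
    (hresT : ∀ t ∈ T, t ∉ D ∪ A → ∃ w ∉ D ∪ A, G.Adj w t) :
    G.IsTotalRestrainedDominatingSet (D ∪ A) := by
  refine ⟨fun v ↦ ?_, fun v hv ↦ ?_⟩ <;> by_cases hvT : v ∈ T
  · exact hdomT v hvT
  · obtain ⟨u, hu, huv⟩ := hdom v hvT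
    exact ⟨u, mem_union_left _ hu, huv⟩
  · exact hresT v hvT hv
  · obtain ⟨w, hwD, hwT, hwv⟩ := hres v hvT (fun h ↦ hv (mem_union_left _ h))
    exact ⟨w, notMem_union.2 ⟨hwD, fun h ↦ hwT (hAT h)⟩, hwv⟩

variable {x y z : V}

lemma totalRestrainedDominationNumber_le_card_add_two (hxy : G.Adj x y) (hyz : G.Adj y z)
    (hxz : x ≠ z) {a c : V} (hxa : G.Adj x a) (hay : a ≠ y) (haz : a ≠ z)
    (hzc : G.Adj z c) (hcx : c ≠ x) (hcy : c ≠ y) {D : Finset V} (hyD : y ∉ D) (hzD : z ∉ D)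
    (hdom : ∀ v ∉ ({x, y, z} : Finset V), ∃ u ∈ D, G.Adj u v)
    (hres : ∀ v ∉ ({x, y, z} : Finset V), v ∉ D →
      ∃ w ∉ D, w ∉ ({x, y, z} : Finset V) ∧ G.Adj w v) :
    G.totalRestrainedDominationNumber ≤ #D + 2 := by
  have hextend (A : Finset V) (hA : #A ≤ 2) (hAT : A ⊆ {x, y, z})
      (hdomT : ∀ t ∈ ({x, y, z} : Finset V), ∃ u ∈ D ∪ A, G.Adj u t)
      (hresT : ∀ t ∈ ({x, y, z} : Finset V), t ∉ D ∪ A → ∃ w ∉ D ∪ A, G.Adj w t) :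
      G.totalRestrainedDominationNumber ≤ #D + 2 :=
    (totalRestrainedDominationNumber_le_card
      (isTotalRestrainedDominatingSet_union hAT hdom hres hdomT hresT)).trans
      ((card_union_le _ _).trans (by omega))
  simp only [mem_insert, mem_singleton, forall_eq_or_imp, forall_eq] at hextend
  by_cases hcD : c ∈ D
  · by_cases haD : a ∈ D
    · exact hextend {x} (by simp) (by simp) ⟨⟨a, by simp [haD], hxa.symm⟩, ⟨x, by simp, hxy⟩,
        ⟨c, by simp [hcD], hzc.symm⟩⟩ ⟨by simp, fun _ ↦ ⟨z, by simp [hzD, hxz.symm], hyz.symm⟩,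
        fun _ ↦ ⟨y, by simp [hyD, hxy.ne.symm], hyz⟩⟩
    · exact hextend {y, z} card_le_two (by simp)
        ⟨⟨y, by simp, hxy.symm⟩, ⟨z, by simp, hyz.symm⟩, ⟨y, by simp, hyz⟩⟩
        ⟨fun _ ↦ ⟨a, by simp [haD, hay, haz], hxa.symm⟩, by simp, by simp⟩
  · exact hextend {x, y} card_le_two (by simp)
      ⟨⟨y, by simp, hxy.symm⟩, ⟨x, by simp, hxy⟩, ⟨y, by simp, hyz⟩⟩
      ⟨by simp, by simp, fun _ ↦ ⟨c, by simp [hcD, hcx, hcy], hzc.symm⟩⟩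

end Extension

section Bondage

variable {V : Type*} [Fintype V] [DecidableEq V] {G : SimpleGraph V} [DecidableRel G.Adj]
  {x y z : V}

lemma deleteEdges_pathStarEdges_exists_adj (hxy : G.Adj x y) (hyz : G.Adj y z) (hxz : x ≠ z)
    (hiso : ∀ v ∉ ({x, y, z} : Finset V), ∃ u ∉ ({x, y, z} : Finset V), G.Adj u v) (v : V) :
    ∃ u, (G.deleteEdges (G.pathStarEdges x y z)).Adj u v := by
  by_cases hv : v ∈ ({x, y, z} : Finset V)
  · simp only [mem_insert, mem_singleton] at hv
    rcases hv with rfl | rfl | rfl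
    · exact ⟨y, (deleteEdges_pathStarEdges_adj_start_iff hxy hxz).2 rfl⟩
    · exact ⟨x, ((deleteEdges_pathStarEdges_adj_start_iff hxy hxz).2 rfl).symm⟩
    · exact ⟨y, (deleteEdges_pathStarEdges_adj_end_iff hyz hxz).2 rfl⟩
  · obtain ⟨u, huT, huv⟩ := hiso v hv
    exact ⟨u, (deleteEdges_pathStarEdges_adj_of_notMem hv).2 ⟨huv, huT⟩⟩

lemma totalRestrainedDominationNumber_lt_deleteEdges_pathStarEdges (hxy : G.Adj x y)
    (hyz : G.Adj y z) (hxz : x ≠ z) (hx : ∃ a, G.Adj x a ∧ a ≠ y ∧ a ≠ z)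
    (hz : ∃ c, G.Adj z c ∧ c ≠ x ∧ c ≠ y)
    (hiso : ∀ v ∉ ({x, y, z} : Finset V), ∃ u ∉ ({x, y, z} : Finset V), G.Adj u v) :
    G.totalRestrainedDominationNumber <
      (G.deleteEdges (G.pathStarEdges x y z)).totalRestrainedDominationNumber := by
  set T : Finset V := {x, y, z}
  obtain ⟨a, hxa, hay, haz⟩ := hx
  obtain ⟨c, hzc, hcx, hcy⟩ := hz
  obtain ⟨S, ⟨hSdom, hSres⟩, hScard⟩ := exists_isTotalRestrainedDominatingSet_card_eq
    (deleteEdges_pathStarEdges_exists_adj hxy hyz hxz hiso)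
  -- `x` and `z` are leaves at `y`, which forces `x, y, z ∈ S`
  have hyS : y ∈ S := by
    obtain ⟨u, huS, hux⟩ := hSdom x
    rwa [(deleteEdges_pathStarEdges_adj_start_iff hxy hxz).1 hux] at huS
  have hxS : x ∈ S := by
    by_contra hxS
    obtain ⟨w, hwS, hwx⟩ := hSres x hxS
    exact hwS ((deleteEdges_pathStarEdges_adj_start_iff hxy hxz).1 hwx ▸ hyS)
  have hzS : z ∈ S := by
    by_contra hzS
    obtain ⟨w, hwS, hwz⟩ := hSres z hzS
    exact hwS ((deleteEdges_pathStarEdges_adj_end_iff hyz hxz).1 hwz ▸ hyS)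
  have hTS : T ⊆ S := by simp [T, insert_subset_iff, hxS, hyS, hzS]
  have hcard : #(S \ T) + 3 = #S := by
    rw [← card_sdiff_add_card_eq_card hTS, card_eq_three.2 ⟨x, y, z, hxy.ne, hxz, hyz.ne, rfl⟩]
  have hle := totalRestrainedDominationNumber_le_card_add_two hxy hyz hxz hxa hay haz hzc hcx hcy
    (D := S \ T) (by simp [T]) (by simp [T]) (fun v hv ↦ ?_) (fun v hv hvD ↦ ?_)
  · omega
  · obtain ⟨u, huS, huv⟩ := hSdom v
    obtain ⟨huv, huT⟩ := (deleteEdges_pathStarEdges_adj_of_notMem hv).1 huv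
    exact ⟨u, mem_sdiff.2 ⟨huS, huT⟩, huv⟩
  · obtain ⟨w, hwS, hwv⟩ := hSres v fun hvS ↦ hvD (mem_sdiff.2 ⟨hvS, hv⟩)
    obtain ⟨hwv, hwT⟩ := (deleteEdges_pathStarEdges_adj_of_notMem hv).1 hwv
    exact ⟨w, fun hwD ↦ hwS (mem_sdiff.1 hwD).1, hwT, hwv⟩

lemma totalRestrainedBondageNumber_le_degree_add_degree_add_degree (hxy : G.Adj x y)
    (hyz : G.Adj y z) (hxz : x ≠ z) (hx : ∃ a, G.Adj x a ∧ a ≠ y ∧ a ≠ z)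
    (hz : ∃ c, G.Adj z c ∧ c ≠ x ∧ c ≠ y)
    (hiso : ∀ v ∉ ({x, y, z} : Finset V), ∃ u ∉ ({x, y, z} : Finset V), G.Adj u v) :
    G.totalRestrainedBondageNumber ≤ (G.degree x + G.degree y + G.degree z - 4 : ℕ) := by
  refine (totalRestrainedBondageNumber_le_card pathStarEdges_subset_edgeSet
    (deleteEdges_pathStarEdges_exists_adj hxy hyz hxz hiso)
    (totalRestrainedDominationNumber_lt_deleteEdges_pathStarEdges hxy hyz hxz hx hz hiso)).trans ?_
  have := card_pathStarEdges_add_four_le hxy hyz hxz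
  exact_mod_cast (by omega)

end Bondage

lemma exists_adj_notMem_of_card_lt_degree {V : Type*} [Fintype V] {G : SimpleGraph V}
    [DecidableRel G.Adj] {v : V} {s : Finset V} (hs : #s < G.degree v) :
    ∃ u, G.Adj v u ∧ u ∉ s := by
  obtain ⟨u, hu, hus⟩ := exists_mem_notMem_of_card_lt_card hs
  exact ⟨u, (G.mem_neighborFinset v u).1 hu, hus⟩

lemma exists_adj_minEdgeDegree_eq {V : Type*} [Fintype V] {G : SimpleGraph V}
    [DecidableRel G.Adj] {v w : V} (hvw : G.Adj v w) :
    ∃ x y, G.Adj x y ∧ G.degree x + G.degree y - 2 = G.minEdgeDegree := by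
  obtain ⟨d, hd⟩ : G.minEdgeDegree ∈
      {k | ∃ d : G.Dart, G.degree d.toProd.1 + G.degree d.toProd.2 - 2 = k} :=
    Nat.sInf_mem ⟨_, ⟨(v, w), hvw⟩, rfl⟩
  exact ⟨_, _, d.adj, hd⟩

end SimpleGraph

theorem statement_10_general {V : Type*} [Fintype V] [DecidableEq V] (G : SimpleGraph V)
    [DecidableRel G.Adj] (hδ : 4 ≤ G.minDegree) :
    G.totalRestrainedBondageNumber ≤ ((G.minEdgeDegree + G.maxDegree - 2 : ℕ) : ℕ∞) := by
  have hdeg (v : V) : 4 ≤ G.degree v := hδ.trans (G.minDegree_le_degree v)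
  obtain ⟨v⟩ : Nonempty V := by
    by_contra hV
    rw [not_nonempty_iff] at hV
    simp [minDegree_of_subsingleton] at hδ
  obtain ⟨w, hvw, -⟩ :=
    exists_adj_notMem_of_card_lt_degree (s := ∅) ((hdeg v).trans_lt' (by simp))
  obtain ⟨x, y, hxy, hξ⟩ := exists_adj_minEdgeDegree_eq hvw
  obtain ⟨z, hyz, hzx⟩ :=
    exists_adj_notMem_of_card_lt_degree (s := {x}) ((hdeg y).trans_lt' (by simp))
  obtain ⟨a, hxa, ha⟩ := exists_adj_notMem_of_card_lt_degree (s := {y, z})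
    (card_le_two.trans_lt ((hdeg x).trans_lt' (by norm_num)))
  obtain ⟨c, hzc, hc⟩ := exists_adj_notMem_of_card_lt_degree (s := {x, y})
    (card_le_two.trans_lt ((hdeg z).trans_lt' (by norm_num)))
  have hiso (u : V) (_ : u ∉ ({x, y, z} : Finset V)) : ∃ t ∉ ({x, y, z} : Finset V), G.Adj t u :=
    (exists_adj_notMem_of_card_lt_degree
      (card_le_three.trans_lt ((hdeg u).trans_lt' (by norm_num)))).imp fun t ht ↦ ⟨ht.2, ht.1.symm⟩
  refine (totalRestrainedBondageNumber_le_degree_add_degree_add_degree hxy hyz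
    (by simpa [eq_comm] using hzx) ⟨a, hxa, by simpa [not_or] using ha⟩
    ⟨c, hzc, by simpa [not_or] using hc⟩ hiso).trans (Nat.cast_le.2 ?_)
  have := G.degree_le_maxDegree z
  have := hdeg x
  have := hdeg y
  omega

/-- `b_tr(G) ≤ ξ(G) + Δ(G) - 2` for connected graphs with `δ ≥ 4`. -/
theorem statement_10 {V : Type*} [Fintype V] [DecidableEq V] (G : SimpleGraph V)
    [DecidableRel G.Adj] (hconn : G.Connected) (hδ : 4 ≤ G.minDegree)
    (hcard : 5 ≤ Fintype.card V) :
    G.totalRestrainedBondageNumber ≤ ((G.minEdgeDegree + G.maxDegree - 2 : ℕ) : ℕ∞) :=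
  statement_10_general G hδ
end

section
/- Let n, d, t be integers with t ≥ d ≥ 6, d ≡ 2 (mod 4), and n = d + 4t + 1. Then the quantity p = (m − n + 1)/2, where m = C(n − d + 1, 2) + d/2, is a nonnegative integer equal to 4t² + t + (2 − d)/4, and for a graph G of order n, size m, and total domination number d that is 2-cell embedded on the nonorientable surface N_{2p} (Euler characteristic χ = 2 − 2p), the bound d ≤ n − √(n + 2 − 2χ) holds with equality. -/
/-- tightness of the total domination bound (even case). -/
theorem statement_17 (n d t m : ℤ) (hdt : d ≤ t) (hd : 6 ≤ d) (hd4 : d % 4 = 2)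
    (hn : n = d + 4 * t + 1) (hm : m = (n - d + 1) * (n - d) / 2 + d / 2) :
    ∃ p : ℤ, 0 ≤ p ∧ 2 * p = m - n + 1 ∧ p = 4 * t ^ 2 + t + (2 - d) / 4 ∧
      (d : ℝ) = (n : ℝ) - Real.sqrt ((n : ℝ) + 2 - 2 * ((2 - 2 * p : ℤ) : ℝ)) := by
  obtain ⟨k, hk⟩ : ∃ k, d = 4 * k + 2 := ⟨d / 4, by omega⟩
  have h1 : (n - d + 1) * (n - d) = 2 * ((2 * t + 1) * (4 * t + 1)) := by
    rw [hn]; ring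
  have h2 : (n - d + 1) * (n - d) / 2 = (2 * t + 1) * (4 * t + 1) := by
    rw [h1]; exact Int.mul_ediv_cancel_left _ two_ne_zero
  have hd2 : d / 2 = 2 * k + 1 := by omega
  have hm' : m = (2 * t + 1) * (4 * t + 1) + (2 * k + 1) := by rw [hm, h2, hd2]
  refine ⟨4 * t ^ 2 + t - k, by nlinarith, by rw [hm', hn, hk]; ring, by omega, ?_⟩
  have harg : (n : ℝ) + 2 - 2 * ((2 - 2 * (4 * t ^ 2 + t - k) : ℤ) : ℝ)
      = ((4 * t + 1 : ℝ)) ^ 2 := by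
    push_cast
    rw [hn, hk]; push_cast; ring
  rw [harg, Real.sqrt_sq (by have ht : (6:ℝ) ≤ (t:ℝ) := (by exact_mod_cast hd.trans hdt); linarith : (0:ℝ) ≤ 4 * t + 1)]
  rw [hn]; push_cast; ring
end
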